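/- arXiv:1307.0278 — 2 statements merged into one kernel-verified Lean document; each statement's English description precedes it below -/
import Mathlib

section
/- Let G be a connected graph with no induced K_{1,3} and no induced hammer, containing an induced 6-cycle C. Then every vertex of G outside C that has a neighbor on C has neighborhood on C inducing a 2K_2 (two disjoint edges of C); moreover two such vertices are adjacent if and only if they have identical neighbor sets on C. -/
open SimpleGraph

/-- The hammer: a triangle `0,1,2` with a pendant path `0 - 3 - 4`. -/
def hammer : SimpleGraph (Fin 5) :=
  SimpleGraph.fromEdgeSet {s(0, 1), s(0, 2), s(1, 2), s(0, 3), s(3, 4)}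

/-- `2K₂`: the disjoint union of two edges, on vertices `0,1,2,3`. -/
def twoK2 : SimpleGraph (Fin 4) := SimpleGraph.fromEdgeSet {s(0, 1), s(2, 3)}

/-!
Let `v` be a vertex off the induced six-cycle `f 0, …, f 5`. If `v` sees `f i` it also sees
`f (i + 1)` or `f (i - 1)`, otherwise `f i` is the centre of a claw. If `v` sees the edge
`f 0 f 1`, a hammer built on a triangle through that edge forces `v` to see `f 3` and `f 4`, and
then seeing `f 2` or `f 5` would make `v` the centre of a claw; so the neighbours of `v` on the
cycle form two opposite edges. Two adjacent vertices with different such patterns give a claw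
centred at one of them, and two non-adjacent vertices with the same pattern give a claw centred at
a common neighbour on the cycle.
-/

namespace SimpleGraph

open Function

variable {V W : Type*} {G : SimpleGraph V} {H : SimpleGraph W}

def Embedding.ofAdjIff (g : W → V) (hg : ∀ a b, G.Adj (g a) (g b) ↔ H.Adj a b)
    (hH : Injective H.neighborSet) : H ↪g G where
  toFun := g
  inj' a b hab := hH <| Set.ext fun c => by
    rw [mem_neighborSet, mem_neighborSet, ← hg, ← hg, hab]
  map_rel_iff' := hg _ _

instance : DecidableRel hammer.Adj := by unfold hammer; infer_instance

instance : DecidableRel twoK2.Adj := by unfold twoK2; infer_instance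

lemma hammer_neighborSet_injective : Injective hammer.neighborSet := fun i j h =>
  (by decide : ∀ i j : Fin 5, (∀ k, hammer.Adj i k ↔ hammer.Adj j k) → i = j) i j
    fun k => Set.ext_iff.1 h k

lemma twoK2_neighborSet_injective : Injective twoK2.neighborSet := fun i j h =>
  (by decide : ∀ i j : Fin 4, (∀ k, twoK2.Adj i k ↔ twoK2.Adj j k) → i = j) i j
    fun k => Set.ext_iff.1 h k

lemma nonempty_claw_embedding {x a b c : V} (hab : a ≠ b) (hac : a ≠ c) (hbc : b ≠ c)
    (hxa : G.Adj x a) (hxb : G.Adj x b) (hxc : G.Adj x c)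
    (nab : ¬G.Adj a b) (nac : ¬G.Adj a c) (nbc : ¬G.Adj b c) :
    Nonempty (completeBipartiteGraph (Fin 1) (Fin 3) ↪g G) := by
  have hleaves : Injective ![a, b, c] := by
    intro i j h
    fin_cases i <;> fin_cases j <;> simp_all [eq_comm]
  have hcentre : ∀ i, G.Adj x (![a, b, c] i) := by
    intro i
    fin_cases i <;> assumption
  refine ⟨⟨⟨Sum.elim (fun _ => x) ![a, b, c],
    (injective_of_subsingleton _).sumElim hleaves fun _ i => (hcentre i).ne⟩, ?_⟩⟩
  rintro (i | i) (j | j)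
  · simp
  · simpa using hcentre j
  · simpa using (hcentre i).symm
  · fin_cases i <;> fin_cases j <;>
      simp [nab, nac, nbc, G.adj_comm b a, G.adj_comm c a, G.adj_comm c b]

lemma nonempty_hammer_embedding {x₀ x₁ x₂ x₃ x₄ : V}
    (h01 : G.Adj x₀ x₁) (h02 : G.Adj x₀ x₂) (h12 : G.Adj x₁ x₂) (h03 : G.Adj x₀ x₃)
    (h34 : G.Adj x₃ x₄) (n04 : ¬G.Adj x₀ x₄) (n13 : ¬G.Adj x₁ x₃) (n14 : ¬G.Adj x₁ x₄)
    (n23 : ¬G.Adj x₂ x₃) (n24 : ¬G.Adj x₂ x₄) : Nonempty (hammer ↪g G) := by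
  refine ⟨.ofAdjIff ![x₀, x₁, x₂, x₃, x₄] (fun i j => ?_) hammer_neighborSet_injective⟩
  fin_cases i <;> fin_cases j <;>
    simp [hammer, h01, h02, h12, h03, h34, h01.symm, h02.symm, h12.symm, h03.symm, h34.symm,
      n04, n13, n14, n23, n24, G.adj_comm _ x₀, G.adj_comm _ x₁, G.adj_comm _ x₂]

def cycleGraph.rotation {n : ℕ} (k : Fin (n + 2)) :
    cycleGraph (n + 2) ≃g cycleGraph (n + 2) where
  toEquiv := Equiv.addLeft k
  map_rel_iff' := by simp [cycleGraph_adj]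

def cycleGraph.reflection {n : ℕ} (k : Fin (n + 2)) :
    cycleGraph (n + 2) ≃g cycleGraph (n + 2) where
  toEquiv := Equiv.subLeft k
  map_rel_iff' := by simp [cycleGraph_adj, or_comm]

@[simp] lemma cycleGraph.rotation_apply {n : ℕ} (k t : Fin (n + 2)) :
    cycleGraph.rotation k t = k + t := rfl

@[simp] lemma cycleGraph.reflection_apply {n : ℕ} (k t : Fin (n + 2)) :
    cycleGraph.reflection k t = k - t := rfl

def oppositeEdges (j : Fin 6) : Finset (Fin 6) := {j, j + 1, j + 3, j + 4}

lemma sub_mem_oppositeEdges_zero {j t : Fin 6} :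
    t - j ∈ oppositeEdges 0 ↔ t ∈ oppositeEdges j := by
  revert j t
  decide

def oppositeEdgesEmbedding (j : Fin 6) : twoK2 ↪g cycleGraph 6 :=
  .ofAdjIff ![j, j + 1, j + 3, j + 4] (by revert j; decide) twoK2_neighborSet_injective

lemma range_oppositeEdgesEmbedding (j : Fin 6) :
    Set.range (oppositeEdgesEmbedding j) = oppositeEdges j := by
  ext t
  simp only [Set.mem_range, Finset.mem_coe]
  revert t j
  decide

lemma exists_not_adj_of_oppositeEdges_ne {j k : Fin 6} (h : oppositeEdges j ≠ oppositeEdges k) :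
    ∃ a ∈ oppositeEdges j \ oppositeEdges k, ∃ b ∈ oppositeEdges j \ oppositeEdges k,
      a ≠ b ∧ ¬(cycleGraph 6).Adj a b := by
  revert j k
  decide

lemma nonempty_induce_image_oppositeEdges_iso (f : cycleGraph 6 ↪g G) (j : Fin 6) :
    Nonempty (G.induce (f '' oppositeEdges j) ≃g twoK2) := by
  rw [← range_oppositeEdgesEmbedding, ← Set.range_comp]
  exact ⟨(f.comp (oppositeEdgesEmbedding j)).isoInduceRange.symm⟩

section InducedSixCycle

variable (hclaw : ¬Nonempty (completeBipartiteGraph (Fin 1) (Fin 3) ↪g G))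
  (hham : ¬Nonempty (hammer ↪g G)) {f : cycleGraph 6 ↪g G} {v w : V}

include hclaw in
lemma adj_one_or_adj_five (hv : v ∉ Set.range f) (h0 : G.Adj v (f 0)) :
    G.Adj v (f 1) ∨ G.Adj v (f 5) := by
  by_contra! h
  refine hclaw (nonempty_claw_embedding (fun e => hv ⟨1, e.symm⟩) (fun e => hv ⟨5, e.symm⟩)
    (f.injective.ne (by decide)) h0.symm ?_ ?_ h.1 h.2 ?_) <;> rw [f.map_adj_iff] <;> decide

include hham in
lemma adj_four_of_adj_zero_one (h0 : G.Adj v (f 0)) (h1 : G.Adj v (f 1)) : G.Adj v (f 4) := by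
  by_contra h4
  by_cases h3 : G.Adj v (f 3)
  · -- triangle `v, f 0, f 1`, tail `v, f 3, f 4`
    refine hham (nonempty_hammer_embedding h0 h1 ?_ h3 ?_ h4 ?_ ?_ ?_ ?_) <;>
      rw [f.map_adj_iff] <;> decide
  by_cases h2 : G.Adj v (f 2)
  · -- triangle `f 2, v, f 1`, tail `f 2, f 3, f 4`
    refine hham (nonempty_hammer_embedding h2.symm ?_ h1 ?_ ?_ ?_ h3 h4 ?_ ?_) <;>
      rw [f.map_adj_iff] <;> decide
  · -- triangle `f 1, v, f 0`, tail `f 1, f 2, f 3`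
    refine hham (nonempty_hammer_embedding h1.symm ?_ h0 ?_ ?_ ?_ h2 h3 ?_ ?_) <;>
      rw [f.map_adj_iff] <;> decide

include hclaw hham in
lemma not_adj_two_of_adj_zero_one (h0 : G.Adj v (f 0)) (h1 : G.Adj v (f 1)) :
    ¬G.Adj v (f 2) := fun h2 => by
  refine hclaw (nonempty_claw_embedding (f.injective.ne (by decide)) (f.injective.ne (by decide))
    (f.injective.ne (by decide)) h0 h2 (adj_four_of_adj_zero_one hham h0 h1) ?_ ?_ ?_) <;>
    rw [f.map_adj_iff] <;> decide

include hclaw hham in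
lemma adj_iff_mem_oppositeEdges_zero (h0 : G.Adj v (f 0)) (h1 : G.Adj v (f 1)) (t : Fin 6) :
    G.Adj v (f t) ↔ t ∈ oppositeEdges 0 := by
  set f' := f.comp (cycleGraph.reflection 1).toEmbedding
  have h0' : G.Adj v (f' 0) := by simpa [f'] using h1
  have h1' : G.Adj v (f' 1) := by simpa [f'] using h0
  have h3 : G.Adj v (f 3) := by simpa [f'] using adj_four_of_adj_zero_one hham h0' h1'
  have h4 := adj_four_of_adj_zero_one hham h0 h1
  have n2 := not_adj_two_of_adj_zero_one hclaw hham h0 h1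
  have n5 : ¬G.Adj v (f 5) := by
    simpa [f'] using not_adj_two_of_adj_zero_one hclaw hham h0' h1'
  fin_cases t <;> simp [oppositeEdges, *]

include hclaw hham in
lemma adj_iff_mem_oppositeEdges {j : Fin 6} (h0 : G.Adj v (f j)) (h1 : G.Adj v (f (j + 1)))
    (t : Fin 6) : G.Adj v (f t) ↔ t ∈ oppositeEdges j := by
  set f' := f.comp (cycleGraph.rotation j).toEmbedding
  have H := adj_iff_mem_oppositeEdges_zero hclaw hham (f := f') (by simpa [f'] using h0)
    (by simpa [f'] using h1) (t - j)
  simpa [f', sub_mem_oppositeEdges_zero] using H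

include hclaw hham in
lemma exists_adj_iff_mem_oppositeEdges (hv : v ∉ Set.range f) {i : Fin 6}
    (hi : G.Adj v (f i)) : ∃ j, ∀ t, G.Adj v (f t) ↔ t ∈ oppositeEdges j := by
  rcases adj_one_or_adj_five hclaw (f := f.comp (cycleGraph.rotation i).toEmbedding)
    (fun ⟨t, ht⟩ => hv ⟨_, ht⟩) (by simpa using hi) with h1 | h5
  · exact ⟨i, adj_iff_mem_oppositeEdges hclaw hham hi (by simpa using h1)⟩
  · exact ⟨i + 5, adj_iff_mem_oppositeEdges hclaw hham (by simpa using h5)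
      (by simpa [add_assoc] using hi)⟩

lemma setOf_mem_range_and_adj_eq_image {j : Fin 6}
    (hN : ∀ t, G.Adj v (f t) ↔ t ∈ oppositeEdges j) :
    {u | u ∈ Set.range f ∧ G.Adj v u} = f '' oppositeEdges j := by
  rw [← show f ⁻¹' G.neighborSet v = oppositeEdges j from Set.ext hN,
    Set.image_preimage_eq_range_inter]
  rfl

include hclaw in
lemma oppositeEdges_eq_of_adj (hw : w ∉ Set.range f) (hvw : G.Adj v w) {j k : Fin 6}
    (hNv : ∀ t, G.Adj v (f t) ↔ t ∈ oppositeEdges j)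
    (hNw : ∀ t, G.Adj w (f t) ↔ t ∈ oppositeEdges k) : oppositeEdges j = oppositeEdges k := by
  by_contra hjk
  obtain ⟨a, ha, b, hb, hab, nab⟩ := exists_not_adj_of_oppositeEdges_ne hjk
  rw [Finset.mem_sdiff] at ha hb
  exact hclaw (nonempty_claw_embedding (fun e => hw ⟨a, e.symm⟩) (fun e => hw ⟨b, e.symm⟩)
    (f.injective.ne hab) hvw ((hNv a).2 ha.1) ((hNv b).2 hb.1) (mt (hNw a).1 ha.2)
    (mt (hNw b).1 hb.2) (f.map_adj_iff.not.2 nab))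

include hclaw in
lemma adj_of_adj_iff_mem_oppositeEdges (hv : v ∉ Set.range f) (hw : w ∉ Set.range f)
    (hvw : v ≠ w) {j : Fin 6} (hNv : ∀ t, G.Adj v (f t) ↔ t ∈ oppositeEdges j)
    (hNw : ∀ t, G.Adj w (f t) ↔ t ∈ oppositeEdges j) : G.Adj v w := by
  by_contra nvw
  have hj : j ∈ oppositeEdges j := by simp [oppositeEdges]
  have hj5 : j + 5 ∉ oppositeEdges j := (by decide : ∀ i : Fin 6, i + 5 ∉ oppositeEdges i) j
  exact hclaw (nonempty_claw_embedding hvw (fun e => hv ⟨j + 5, e.symm⟩)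
    (fun e => hw ⟨j + 5, e.symm⟩) ((hNv j).2 hj).symm ((hNw j).2 hj).symm
    (f.map_adj_iff.2 ((by decide : ∀ i : Fin 6, (cycleGraph 6).Adj i (i + 5)) j)) nvw
    (mt (hNv _).1 hj5) (mt (hNw _).1 hj5))

end InducedSixCycle

end SimpleGraph

theorem claw_hammer_free_C6_neighbors_general {V : Type*} (G : SimpleGraph V)
    (hclaw : ¬ Nonempty (completeBipartiteGraph (Fin 1) (Fin 3) ↪g G))
    (hham : ¬ Nonempty (hammer ↪g G))
    (f : cycleGraph 6 ↪g G) :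
    (∀ v : V, v ∉ Set.range f → (∃ u ∈ Set.range f, G.Adj v u) →
        Nonempty ((G.induce {u | u ∈ Set.range f ∧ G.Adj v u}) ≃g twoK2)) ∧
      (∀ v w : V, v ∉ Set.range f → w ∉ Set.range f →
        (∃ u ∈ Set.range f, G.Adj v u) → (∃ u ∈ Set.range f, G.Adj w u) → v ≠ w →
        (G.Adj v w ↔ {u | u ∈ Set.range f ∧ G.Adj v u} = {u | u ∈ Set.range f ∧ G.Adj w u})) := by
  have pattern : ∀ v, v ∉ Set.range f → (∃ u ∈ Set.range f, G.Adj v u) →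
      ∃ j, ∀ t, G.Adj v (f t) ↔ t ∈ oppositeEdges j := by
    rintro v hv ⟨_, ⟨i, rfl⟩, hi⟩
    exact exists_adj_iff_mem_oppositeEdges hclaw hham hv hi
  refine ⟨fun v hv hvC => ?_, fun v w hv hw hvC hwC hvw => ?_⟩
  · obtain ⟨j, hj⟩ := pattern v hv hvC
    rw [setOf_mem_range_and_adj_eq_image hj]
    exact nonempty_induce_image_oppositeEdges_iso f j
  · obtain ⟨j, hj⟩ := pattern v hv hvC
    obtain ⟨k, hk⟩ := pattern w hw hwC
    rw [setOf_mem_range_and_adj_eq_image hj, setOf_mem_range_and_adj_eq_image hk,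
      (Set.image_injective.2 f.injective).eq_iff, Finset.coe_inj]
    exact ⟨fun hvw' => oppositeEdges_eq_of_adj hclaw hw hvw' hj hk,
      fun hjk => adj_of_adj_iff_mem_oppositeEdges hclaw hv hw hvw hj (hjk ▸ hk)⟩

/-- In a connected `{K_{1,3}, hammer}`-free graph with an induced 6-cycle `C`:
any vertex outside `C` with a neighbor on `C` sees a `2K₂` on `C`, and two such
vertices are adjacent iff they have the same neighbors on `C`. -/
theorem claw_hammer_free_C6_neighbors {V : Type*} (G : SimpleGraph V) (hconn : G.Connected)
    (hclaw : ¬ Nonempty (completeBipartiteGraph (Fin 1) (Fin 3) ↪g G))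
    (hham : ¬ Nonempty (hammer ↪g G))
    (f : cycleGraph 6 ↪g G) :
    (∀ v : V, v ∉ Set.range f → (∃ u ∈ Set.range f, G.Adj v u) →
        Nonempty ((G.induce {u | u ∈ Set.range f ∧ G.Adj v u}) ≃g twoK2)) ∧
      (∀ v w : V, v ∉ Set.range f → w ∉ Set.range f →
        (∃ u ∈ Set.range f, G.Adj v u) → (∃ u ∈ Set.range f, G.Adj w u) → v ≠ w →
        (G.Adj v w ↔ {u | u ∈ Set.range f ∧ G.Adj v u} = {u | u ∈ Set.range f ∧ G.Adj w u})) :=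
  claw_hammer_free_C6_neighbors_general G hclaw hham f
end

section
/- Let G be a connected graph with no induced P_5 and no induced C_4, containing an induced 5-cycle C. Then every vertex of G not on C that has a neighbor on C is adjacent either to all five vertices of C or to exactly three consecutive vertices of C. -/
open SimpleGraph Finset

/-!
Let `S` be the set of positions on `C` adjacent to `v`. If `v` sees `c_i` and `c_{i+2}` but not
`c_{i+1}`, then `v c_i c_{i+1} c_{i+2}` is an induced `C_4`; if `v` sees `c_i` but none of
`c_{i+1}, c_{i+2}, c_{i+3}`, then `v c_i c_{i+1} c_{i+2} c_{i+3}` is an induced `P_5`. A finite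
check shows that the only nonempty subsets of `ℤ/5` avoiding both patterns are the whole cycle
and the runs of three consecutive positions.
-/

theorem Finset.fin_five_eq_univ_or_eq_three_consecutive (S : Finset (Fin 5)) (hne : S.Nonempty)
    (hgap : ∀ i ∈ S, i + 2 ∈ S → i + 1 ∈ S)
    (hlong : ∀ i ∈ S, i + 1 ∈ S ∨ i + 2 ∈ S ∨ i + 3 ∈ S) :
    S = univ ∨ ∃ i, S = {i, i + 1, i + 2} := by
  revert S
  decide

namespace SimpleGraph

def cycleGraph.rotate (n : ℕ) (i : Fin (n + 2)) : cycleGraph (n + 2) ≃g cycleGraph (n + 2) :=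
  ⟨Equiv.addLeft i, by simp [cycleGraph_adj]⟩

variable {V : Type*} {G : SimpleGraph V}

theorem nonempty_cycleGraph_four_embedding {w x y z : V} (hwy : w ≠ y) (hxz : x ≠ z)
    (hwx : G.Adj w x) (hxy : G.Adj x y) (hyz : G.Adj y z) (hzw : G.Adj z w)
    (hnwy : ¬ G.Adj w y) (hnxz : ¬ G.Adj x z) :
    Nonempty (cycleGraph 4 ↪g G) := by
  refine ⟨⟨⟨![w, x, y, z], ?_⟩, ?_⟩⟩
  · intro a b
    fin_cases a <;> fin_cases b <;>
      simp_all [hwx.ne, hxy.ne, hyz.ne, hzw.ne, hwx.ne', hxy.ne', hyz.ne', hzw.ne',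
        hwy.symm, hxz.symm]
  · intro a b
    change G.Adj (![w, x, y, z] a) (![w, x, y, z] b) ↔ _
    fin_cases a <;> fin_cases b <;>
      simp_all [cycleGraph_adj (n := 2), G.adj_comm] <;> decide

theorem nonempty_pathGraph_five_embedding {a b c d e : V}
    (hac : a ≠ c) (had : a ≠ d) (hae : a ≠ e) (hbd : b ≠ d) (hbe : b ≠ e) (hce : c ≠ e)
    (hab : G.Adj a b) (hbc : G.Adj b c) (hcd : G.Adj c d) (hde : G.Adj d e)
    (hnac : ¬ G.Adj a c) (hnad : ¬ G.Adj a d) (hnae : ¬ G.Adj a e)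
    (hnbd : ¬ G.Adj b d) (hnbe : ¬ G.Adj b e) (hnce : ¬ G.Adj c e) :
    Nonempty (pathGraph 5 ↪g G) := by
  refine ⟨⟨⟨![a, b, c, d, e], ?_⟩, ?_⟩⟩
  · intro i j
    fin_cases i <;> fin_cases j <;>
      simp_all [hab.ne, hbc.ne, hcd.ne, hde.ne, hab.ne', hbc.ne', hcd.ne', hde.ne',
        hac.symm, had.symm, hae.symm, hbd.symm, hbe.symm, hce.symm]
  · intro i j
    change G.Adj (![a, b, c, d, e] i) (![a, b, c, d, e] j) ↔ _
    fin_cases i <;> fin_cases j <;>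
      simp_all [pathGraph_adj, G.adj_comm]

section InducedFiveCycle

variable (g : cycleGraph 5 ↪g G) {v : V}

theorem Embedding.adj_one_of_adj_zero_of_adj_two (hC4 : ¬ Nonempty (cycleGraph 4 ↪g G))
    (hv : ∀ k, g k ≠ v) (h0 : G.Adj v (g 0)) (h2 : G.Adj v (g 2)) : G.Adj v (g 1) := by
  by_contra h1
  exact hC4 <| nonempty_cycleGraph_four_embedding (hv 1).symm (g.injective.ne (by decide)) h0
    (g.map_adj_iff.mpr (by decide)) (g.map_adj_iff.mpr (by decide)) h2.symm h1
    (g.map_adj_iff.not.mpr (by decide))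

theorem Embedding.adj_one_or_two_or_three_of_adj_zero (hP5 : ¬ Nonempty (pathGraph 5 ↪g G))
    (hv : ∀ k, g k ≠ v) (h0 : G.Adj v (g 0)) :
    G.Adj v (g 1) ∨ G.Adj v (g 2) ∨ G.Adj v (g 3) := by
  by_contra! ⟨h1, h2, h3⟩
  exact hP5 <| nonempty_pathGraph_five_embedding (hv 1).symm (hv 2).symm (hv 3).symm
    (g.injective.ne (by decide)) (g.injective.ne (by decide)) (g.injective.ne (by decide))
    h0 (g.map_adj_iff.mpr (by decide)) (g.map_adj_iff.mpr (by decide))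
    (g.map_adj_iff.mpr (by decide)) h1 h2 h3 (g.map_adj_iff.not.mpr (by decide))
    (g.map_adj_iff.not.mpr (by decide)) (g.map_adj_iff.not.mpr (by decide))

end InducedFiveCycle

end SimpleGraph

theorem P5_C4_free_C5_neighbors_general {V : Type*} (G : SimpleGraph V)
    (hP5 : ¬ Nonempty (pathGraph 5 ↪g G))
    (hC4 : ¬ Nonempty (cycleGraph 4 ↪g G))
    (f : cycleGraph 5 ↪g G) :
    ∀ v : V, v ∉ Set.range f → (∃ u ∈ Set.range f, G.Adj v u) →
      (∀ u ∈ Set.range f, G.Adj v u) ∨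
        ∃ i : Fin 5, {u | u ∈ Set.range f ∧ G.Adj v u} = {f i, f (i + 1), f (i + 2)} := by
  rintro v hv ⟨_, ⟨j, rfl⟩, hj⟩
  classical
  set S := univ.filter fun k => G.Adj v (f k)
  have hN : {u | u ∈ Set.range f ∧ G.Adj v u} = f '' S := by
    rw [coe_filter_univ]
    exact Set.image_preimage_eq_range_inter.symm
  let rot (i : Fin 5) : cycleGraph 5 ↪g G := f.comp (cycleGraph.rotate 3 i).toEmbedding
  have hrot (i k : Fin 5) : rot i k = f (i + k) := rfl
  have hv' (i k : Fin 5) : rot i k ≠ v := fun h => hv ⟨_, h⟩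
  have hgap (i : Fin 5) (hi : i ∈ S) (hi2 : i + 2 ∈ S) : i + 1 ∈ S := by
    simp only [S, mem_filter_univ] at hi hi2 ⊢
    simpa [hrot] using (rot i).adj_one_of_adj_zero_of_adj_two hC4 (hv' i)
      (by simpa [hrot] using hi) (by simpa [hrot] using hi2)
  have hlong (i : Fin 5) (hi : i ∈ S) : i + 1 ∈ S ∨ i + 2 ∈ S ∨ i + 3 ∈ S := by
    simp only [S, mem_filter_univ] at hi ⊢
    simpa [hrot] using (rot i).adj_one_or_two_or_three_of_adj_zero hP5 (hv' i)
      (by simpa [hrot] using hi)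
  rcases S.fin_five_eq_univ_or_eq_three_consecutive ⟨j, by simpa [S]⟩ hgap hlong with h | ⟨i, h⟩
  · exact Or.inl fun _ ⟨k, hk⟩ => hk ▸ filter_eq_self.mp h k (mem_univ k)
  · exact Or.inr ⟨i, by rw [hN, h]; simp [Set.image_insert_eq]⟩

/-- In a connected `{P_5, C_4}`-free graph with an induced 5-cycle `C`, every
vertex off `C` with a neighbor on `C` is adjacent to all of `C` or to exactly
three consecutive vertices of `C`. -/
theorem P5_C4_free_C5_neighbors {V : Type*} (G : SimpleGraph V) (hconn : G.Connected)
    (hP5 : ¬ Nonempty (pathGraph 5 ↪g G))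
    (hC4 : ¬ Nonempty (cycleGraph 4 ↪g G))
    (f : cycleGraph 5 ↪g G) :
    ∀ v : V, v ∉ Set.range f → (∃ u ∈ Set.range f, G.Adj v u) →
      (∀ u ∈ Set.range f, G.Adj v u) ∨
        ∃ i : Fin 5, {u | u ∈ Set.range f ∧ G.Adj v u} = {f i, f (i + 1), f (i + 2)} :=
  P5_C4_free_C5_neighbors_general G hP5 hC4 f
end
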